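/- arXiv:0911.3267 — 3 statements merged into one kernel-verified Lean document; each statement's English description precedes it below -/
import Mathlib

section
/- Let p be an odd prime, V = (ℤ/p)² with basis x = (1,0), y = (0,1), and σ the automorphism of V with σ(x) = x, σ(y) = x + y. Let H = ⊕_{i∈ℕ} V with σ acting diagonally, and let τ be the induced automorphism of M = Hom_{ℤ/p}(H, ℤ/p) given by τ(g) = g ∘ σ^{−1}. Then the image of the endomorphism 1 − τ of M equals the subspace of τ-invariant elements of M, and both equal the subspace { g ∈ M : g(x_i) = 0 for all i ∈ ℕ }. -/
/-!
On `V`, `σ⁻¹ = 1 - N` with `N (a, b) = (b, 0)` (`shearNil`), so `(1 - τ) g = g ∘ N` summandwise. As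
`ker N = im N = ℤ/p · x`, the functional `g ∘ N` vanishes iff `g` kills every `xᵢ`; and such a `g`
is `h ∘ N` for `h = g ∘ N'`, `N' (a, b) = (0, a)`, because `N' ∘ N` is the projection onto `ℤ/p · y`.
-/

/-- The automorphism `τ(g) = g ∘ σ⁻¹` of the dual `M = Hom_{ℤ/p}(H, ℤ/p)` of
`H = ⊕_{i ∈ ℕ} (ℤ/p)²`, induced by the diagonal action of `σ` on `H`. -/
noncomputable def tau (p : ℕ) (σ : (ZMod p × ZMod p) ≃ₗ[ZMod p] (ZMod p × ZMod p)) :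
    Module.Dual (ZMod p) (ℕ →₀ ZMod p × ZMod p) →ₗ[ZMod p]
      Module.Dual (ZMod p) (ℕ →₀ ZMod p × ZMod p) :=
  (Finsupp.mapRange.linearMap σ.symm.toLinearMap).dualMap

section Shear

variable {R : Type*} [CommRing R]

theorem LinearMap.apply_eq_of_shear {σ : (R × R) →ₗ[R] (R × R)}
    (hx : σ (1, 0) = (1, 0)) (hy : σ (0, 1) = (1, 0) + (0, 1)) (v : R × R) :
    σ v = (v.1 + v.2, v.2) := by
  have hv : v = v.1 • ((1 : R), (0 : R)) + v.2 • ((0 : R), (1 : R)) := by ext <;> simp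
  rw [hv, map_add, map_smul, map_smul, hx, hy]
  ext <;> simp

theorem LinearEquiv.symm_apply_eq_of_shear {σ : (R × R) ≃ₗ[R] (R × R)}
    (hx : σ (1, 0) = (1, 0)) (hy : σ (0, 1) = (1, 0) + (0, 1)) (v : R × R) :
    σ.symm v = (v.1 - v.2, v.2) := by
  apply σ.injective
  rw [σ.apply_symm_apply,
    show σ _ = _ from LinearMap.apply_eq_of_shear (σ := σ.toLinearMap) hx hy _]
  ext <;> simp

variable (R) in
def shearNil : (R × R) →ₗ[R] (R × R) := LinearMap.inl R R R ∘ₗ LinearMap.snd R R R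

variable {ι : Type*}

theorem sub_dualMap_mapRange_shear {σ : (R × R) ≃ₗ[R] (R × R)}
    (hx : σ (1, 0) = (1, 0)) (hy : σ (0, 1) = (1, 0) + (0, 1)) (g : Module.Dual R (ι →₀ R × R)) :
    g - (Finsupp.mapRange.linearMap σ.symm.toLinearMap).dualMap g =
      g ∘ₗ Finsupp.mapRange.linearMap (shearNil R) := by
  refine Finsupp.lhom_ext fun i v => ?_
  simp only [LinearMap.sub_apply, LinearMap.dualMap_apply, LinearMap.comp_apply,
    Finsupp.mapRange.linearMap_apply, Finsupp.mapRange_single, LinearEquiv.coe_coe,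
    LinearEquiv.symm_apply_eq_of_shear hx hy, ← map_sub, ← Finsupp.single_sub]
  congr 2
  ext <;> simp [shearNil]

theorem comp_mapRange_shearNil_eq_zero_iff (g : Module.Dual R (ι →₀ R × R)) :
    g ∘ₗ Finsupp.mapRange.linearMap (shearNil R) = 0 ↔ ∀ i, g (Finsupp.single i (1, 0)) = 0 := by
  constructor
  · intro h i
    simpa [shearNil] using LinearMap.congr_fun h (Finsupp.single i (0, 1))
  · intro h
    refine Finsupp.lhom_ext fun i v => ?_
    have hv : ((v.2, 0) : R × R) = v.2 • (1, 0) := by ext <;> simp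
    simp only [shearNil, LinearMap.comp_apply, Finsupp.mapRange.linearMap_apply,
      Finsupp.mapRange_single, LinearMap.coe_inl, LinearMap.snd_apply, LinearMap.zero_apply]
    rw [hv, ← Finsupp.smul_single, map_smul, h i, smul_zero]

theorem range_comp_mapRange_shearNil :
    Set.range (fun h : Module.Dual R (ι →₀ R × R) => h ∘ₗ Finsupp.mapRange.linearMap (shearNil R)) =
      {g | ∀ i, g (Finsupp.single i (1, 0)) = 0} := by
  ext g
  constructor
  · rintro ⟨h, rfl⟩ i
    simp [shearNil, Prod.mk_zero_zero]
  · intro hg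
    refine ⟨g ∘ₗ Finsupp.mapRange.linearMap (LinearMap.inr R R R ∘ₗ LinearMap.fst R R R),
      Finsupp.lhom_ext fun i v => ?_⟩
    have hv : v = v.1 • ((1 : R), (0 : R)) + ((0 : R), v.2) := by ext <;> simp
    conv_rhs => rw [hv, Finsupp.single_add, map_add, ← Finsupp.smul_single, map_smul, hg i]
    simp [shearNil]

end Shear

theorem statement9_general (p : ℕ)
    (σ : (ZMod p × ZMod p) ≃ₗ[ZMod p] (ZMod p × ZMod p))
    (hx : σ (1, 0) = (1, 0)) (hy : σ (0, 1) = (1, 0) + (0, 1)) :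
    Set.range ⇑(1 - tau p σ) = {g | tau p σ g = g} ∧
      {g | tau p σ g = g} =
        {g : Module.Dual (ZMod p) (ℕ →₀ ZMod p × ZMod p) |
          ∀ i : ℕ, g (Finsupp.single i (1, 0)) = 0} := by
  have one_sub_tau : ⇑(1 - tau p σ) = fun g => g ∘ₗ Finsupp.mapRange.linearMap (shearNil _) :=
    funext (sub_dualMap_mapRange_shear hx hy)
  have fixed_eq : {g | tau p σ g = g} = {g | ∀ i : ℕ, g (Finsupp.single i (1, 0)) = 0} := by
    ext g
    rw [Set.mem_ofPred_eq, Set.mem_ofPred_eq, ← comp_mapRange_shearNil_eq_zero_iff,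
      ← congr_fun one_sub_tau g, LinearMap.sub_apply, Module.End.one_apply, sub_eq_zero, eq_comm]
  exact ⟨by rw [one_sub_tau, range_comp_mapRange_shearNil, fixed_eq], fixed_eq⟩

/-- Let `p` be an odd prime, `V = (ℤ/p)²` with basis `x = (1,0)`,
`y = (0,1)`, and `σ` the automorphism of `V` with `σ(x) = x`, `σ(y) = x + y`.  Let
`H = ⊕_{i ∈ ℕ} V` with `σ` acting diagonally, and `τ` the induced automorphism of
`M = Hom_{ℤ/p}(H, ℤ/p)`, `τ(g) = g ∘ σ⁻¹`.  Then the image of `1 - τ` equals the subspace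
of `τ`-invariant elements of `M`, and both equal `{g ∈ M : g(xᵢ) = 0 for all i}`. -/
theorem statement9 (p : ℕ) (hp : p.Prime) (hodd : Odd p)
    (σ : (ZMod p × ZMod p) ≃ₗ[ZMod p] (ZMod p × ZMod p))
    (hx : σ (1, 0) = (1, 0)) (hy : σ (0, 1) = (1, 0) + (0, 1)) :
    Set.range ⇑(1 - tau p σ) = {g | tau p σ g = g} ∧
      {g | tau p σ g = g} =
        {g : Module.Dual (ZMod p) (ℕ →₀ ZMod p × ZMod p) |
          ∀ i : ℕ, g (Finsupp.single i (1, 0)) = 0} :=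
  statement9_general p σ hx hy
end

section
/- Let p be an odd prime, V = (ℤ/p)² with basis x = (1,0), y = (0,1), and σ the automorphism of V with σ(x) = x, σ(y) = x + y. Let H = ⊕_{i∈ℕ} V with σ acting diagonally, and let τ be the induced automorphism of M = Hom_{ℤ/p}(H, ℤ/p) given by τ(g) = g ∘ σ^{−1}. Then the quotient vector space M / im(1 − τ) is infinite-dimensional over ℤ/p; indeed, the images of the functionals g_i defined by g_i(x_j) = δ_{ij} and g_i(y_j) = 0 for all j form an infinite linearly independent family in this quotient. -/
/-- The functional `gᵢ ∈ M = Hom_{ℤ/p}(H, ℤ/p)` with `gᵢ(xⱼ) = δᵢⱼ` and `gᵢ(yⱼ) = 0` for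
all `j` (it reads off the first coordinate of the `i`-th summand of `H = ⊕_{i∈ℕ} (ℤ/p)²`). -/
noncomputable def gFun (p : ℕ) (i : ℕ) :
    Module.Dual (ZMod p) (ℕ →₀ ZMod p × ZMod p) :=
  (LinearMap.fst (ZMod p) (ZMod p) (ZMod p)).comp (Finsupp.lapply i)

/-!
Every element `g - g ∘ σ⁻¹` of `im (1 - τ)` vanishes on the `σ`-fixed vectors `xⱼ`, so evaluation
at the `xⱼ` descends to a map `M / im (1 - τ) → (ℕ → ℤ/p)`. It sends the class of `gᵢ` to the
`i`-th standard vector, hence these classes are linearly independent.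
-/

open Module

theorem Submodule.linearIndependent_mkQ_of_pairing {R M ι : Type*} [CommRing R]
    [AddCommGroup M] [Module R M] [DecidableEq ι] {W : Submodule R M} {g : ι → M}
    {φ : ι → Dual R M} (hW : ∀ w ∈ W, ∀ j, φ j w = 0)
    (hgφ : ∀ i j, φ j (g i) = Pi.single (M := fun _ => R) i 1 j) :
    LinearIndependent R (fun i => W.mkQ (g i)) := by
  let E : M ⧸ W →ₗ[R] ι → R :=
    W.liftQ (LinearMap.pi φ) fun w hw => funext fun j => hW w hw j
  refine LinearIndependent.of_comp E ?_
  convert Pi.linearIndependent_single_one ι R with i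
  exact funext (hgφ i)

theorem LinearMap.one_sub_dualMap_apply_eq_zero {R H : Type*} [CommRing R] [AddCommGroup H]
    [Module R H] {f : H →ₗ[R] H} {v : H} (hv : f v = v) (g : Dual R H) :
    ((1 - f.dualMap) g) v = 0 := by
  simp [hv]

theorem gFun_single (p i j : ℕ) :
    gFun p i (Finsupp.single j (1, 0)) = Pi.single (M := fun _ => ZMod p) i 1 j := by
  rcases eq_or_ne j i with rfl | hij
  · simp [gFun]
  · simp [gFun, hij, Ne.symm hij]

theorem statement10_general (p : ℕ) (hp : p.Prime)
    (σ : (ZMod p × ZMod p) ≃ₗ[ZMod p] (ZMod p × ZMod p))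
    (hx : σ (1, 0) = (1, 0)) :
    LinearIndependent (ZMod p)
      (fun i : ℕ =>
        Submodule.Quotient.mk (p := LinearMap.range (1 - tau p σ)) (gFun p i)) ∧
    ¬ Module.Finite (ZMod p)
      (Module.Dual (ZMod p) (ℕ →₀ ZMod p × ZMod p) ⧸
        LinearMap.range (1 - tau p σ)) := by
  have : Fact p.Prime := ⟨hp⟩
  have hfixed (j : ℕ) :
      Finsupp.mapRange.linearMap σ.symm.toLinearMap (Finsupp.single j (1, 0)) =
        Finsupp.single j ((1 : ZMod p), (0 : ZMod p)) := by
    simp [σ.symm_apply_eq.mpr hx.symm]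
  have hli : LinearIndependent (ZMod p)
      (fun i : ℕ => Submodule.Quotient.mk (p := LinearMap.range (1 - tau p σ)) (gFun p i)) :=
    Submodule.linearIndependent_mkQ_of_pairing
      (φ := fun j => Dual.eval _ _ (Finsupp.single j (1, 0)))
      (by rintro _ ⟨g, rfl⟩ j; exact LinearMap.one_sub_dualMap_apply_eq_zero (hfixed j) g)
      (gFun_single p)
  exact ⟨hli, fun _ => Module.Finite.not_linearIndependent_of_infinite _ hli⟩

/-- **Statement 10.** Let `p` be an odd prime, `V = (ℤ/p)²`, and `σ` the automorphism of `V`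
with `σ(x) = x`, `σ(y) = x + y` (`x = (1,0)`, `y = (0,1)`).  Let `H = ⊕_{i ∈ ℕ} V` with `σ`
acting diagonally and `τ(g) = g ∘ σ⁻¹` the induced automorphism of `M = Hom_{ℤ/p}(H, ℤ/p)`.
Then the images in `M / im (1 - τ)` of the functionals `gᵢ` (with `gᵢ(xⱼ) = δᵢⱼ`,
`gᵢ(yⱼ) = 0`) form an infinite linearly independent family; in particular the quotient
`M / im (1 - τ)` is infinite-dimensional over `ℤ/p`. -/
theorem statement10 (p : ℕ) (hp : p.Prime) (hodd : Odd p)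
    (σ : (ZMod p × ZMod p) ≃ₗ[ZMod p] (ZMod p × ZMod p))
    (hx : σ (1, 0) = (1, 0)) (hy : σ (0, 1) = (1, 0) + (0, 1)) :
    LinearIndependent (ZMod p)
      (fun i : ℕ =>
        Submodule.Quotient.mk (p := LinearMap.range (1 - tau p σ)) (gFun p i)) ∧
    ¬ Module.Finite (ZMod p)
      (Module.Dual (ZMod p) (ℕ →₀ ZMod p × ZMod p) ⧸
        LinearMap.range (1 - tau p σ)) :=
  statement10_general p hp σ hx
end

section
/- Let p be a prime and let k be a commutative ring in which p = 0. Then in the divided power algebra Γ_k(M) of any k-module M, for every integer n ≥ 1 and every m ∈ M the p-th power of the divided power element satisfies (m^{(n)})^p = 0; equivalently, the multinomial coefficient (pn)!/(n!)^p is divisible by p for every n ≥ 1, and (m^{(n)})^p = ((pn)!/(n!)^p) · m^{(pn)}. -/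
/-!
Iterating `γ i * γ j = C(i+j, i) • γ (i+j)` gives `γ n ^ j = M • γ (j * n)` with the multinomial
coefficient `M = (j n)! / (n!)^j = ∏_{i ≤ j} C(i n, n)`. For `j = p` the last factor is
`C(p n, n) = p · C(p n - 1, n - 1)`, so `p ∣ M`, and `p` vanishes in `A`.
-/

open Finset

theorem Nat.dvd_choose_mul_self (a : ℕ) {n : ℕ} (hn : n ≠ 0) : a ∣ (a * n).choose n := by
  rcases Nat.eq_zero_or_pos a with rfl | ha
  · simp [Nat.choose_eq_zero_of_lt (Nat.pos_of_ne_zero hn)]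
  have hpos : 0 < n := Nat.pos_of_ne_zero hn
  have hmul := Nat.add_one_mul_choose_eq (a * n - 1) (n - 1)
  rw [Nat.sub_add_cancel (Nat.one_le_iff_ne_zero.mpr (Nat.mul_ne_zero ha.ne' hn)),
    Nat.sub_add_cancel hpos] at hmul
  refine ⟨(a * n - 1).choose (n - 1), Nat.eq_of_mul_eq_mul_right hpos ?_⟩
  rw [← hmul]
  ring

theorem Nat.multinomial_range_const (j n : ℕ) :
    Nat.multinomial (range j) (fun _ ↦ n) = (j * n).factorial / n.factorial ^ j := by
  simp [Nat.multinomial, sum_const, prod_const]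

theorem Nat.multinomial_range_succ_const (j n : ℕ) :
    Nat.multinomial (range (j + 1)) (fun _ ↦ n) =
      ((j + 1) * n).choose n * Nat.multinomial (range j) (fun _ ↦ n) := by
  rw [range_add_one, Nat.multinomial_insert notMem_range_self, sum_const, card_range, smul_eq_mul,
    add_mul, one_mul, add_comm]

theorem Nat.dvd_multinomial_range_const {p n : ℕ} (hp : p ≠ 0) (hn : n ≠ 0) :
    p ∣ Nat.multinomial (range p) (fun _ ↦ n) := by
  obtain ⟨q, rfl⟩ := Nat.exists_eq_succ_of_ne_zero hp
  rw [Nat.multinomial_range_succ_const]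
  exact (Nat.dvd_choose_mul_self _ hn).mul_right _

theorem pow_eq_multinomial_smul {R : Type*} [Semiring R] {γ : ℕ → R} (hγ0 : γ 0 = 1)
    (hγ : ∀ i j : ℕ, γ i * γ j = ((i + j).choose i : ℕ) • γ (i + j)) (n j : ℕ) :
    γ n ^ j = Nat.multinomial (range j) (fun _ ↦ n) • γ (j * n) := by
  induction j with
  | zero => simp [hγ0]
  | succ j ih =>
    rw [pow_succ', ih, mul_smul_comm, hγ, smul_smul, Nat.multinomial_range_succ_const, mul_comm,
      add_mul, one_mul, add_comm]

/-- **Statement 17.** Let `p` be a prime and `k` a commutative ring in which `p = 0`.  Then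
in the divided power algebra `Γ_k(M)` of any `k`-module `M`, for every `n ≥ 1` and every
`m ∈ M`, the `p`-th power of the divided power element `m⁽ⁿ⁾` vanishes:  `(m⁽ⁿ⁾)^p = 0`.
Equivalently: the multinomial coefficient `(pn)!/(n!)^p` is divisible by `p` for every
`n ≥ 1`, and `(m⁽ⁿ⁾)^p = ((pn)!/(n!)^p) • m⁽ᵖⁿ⁾`.

Here the divided powers of an element `m` of a `k`-module are formalized as a family
`γ : ℕ → A` of elements of a commutative `k`-algebra `A` with `γ 0 = 1` (so `γ n = m⁽ⁿ⁾`
and `γ 1 = m`) satisfying the defining relations `m⁽ⁱ⁾ · m⁽ʲ⁾ = C(i+j, i) · m⁽ⁱ⁺ʲ⁾` of the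
divided power algebra `Γ_k(M)`. -/
theorem statement17 (p : ℕ) (hp : p.Prime) (k : Type) [CommRing k] (hpk : (p : k) = 0)
    (A : Type) [CommRing A] [Algebra k A]
    (γ : ℕ → A) (hγ0 : γ 0 = 1)
    (hγ : ∀ i j : ℕ, γ i * γ j = ((i + j).choose i : ℕ) • γ (i + j)) :
    ∀ n : ℕ, 1 ≤ n →
      (p ∣ (p * n).factorial / (n.factorial ^ p) ∧
        γ n ^ p = ((p * n).factorial / (n.factorial ^ p)) • γ (p * n) ∧
        γ n ^ p = 0) := by
  intro n hn
  rw [← Nat.multinomial_range_const]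
  have hdvd := Nat.dvd_multinomial_range_const hp.ne_zero (Nat.one_le_iff_ne_zero.mp hn)
  have hpow := pow_eq_multinomial_smul hγ0 hγ n p
  have hpA : (p : A) = 0 := by rw [← map_natCast (algebraMap k A), hpk, map_zero]
  refine ⟨hdvd, hpow, ?_⟩
  obtain ⟨c, hc⟩ := hdvd
  rw [hpow, hc, mul_smul, nsmul_eq_mul, hpA, zero_mul]
end
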